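/- arXiv:2409.18617 — 2 statements merged into one kernel-verified Lean document; each statement's English description precedes it below -/
import Mathlib

section
/- Let b_1, ..., b_m be real numbers (m ≥ 2) with b_1 + ... + b_m = 0. Then -((m-2)/√(m(m-1))) (Σ b_i²)^{3/2} ≤ Σ b_i³ ≤ ((m-2)/√(m(m-1))) (Σ b_i²)^{3/2}. -/
/-!
Every entry of a zero-sum vector of length `n` satisfies `b i ≤ (n - 1) t` with
`t = √(∑ b i ^ 2 / (n (n - 1)))`, by Cauchy–Schwarz on the other `n - 1` entries. For `x ≤ s`
the cubic `(x - r)² (x - s)` is nonpositive, so `x³` is bounded by a quadratic in `x`; summing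
this over the entries with `s = (n - 1) t`, `r = -t` bounds `∑ b i ³` by the power sums of
degree `≤ 2`, which are known. Equality holds at `(n - 1, -1, …, -1)`. The lower bound is the
upper bound for `-b`.
-/

open Finset

section
variable {ι : Type*} [Fintype ι]

theorem card_mul_sq_le_of_sum_eq_zero {b : ι → ℝ} (hb : ∑ i, b i = 0) (i : ι) :
    Fintype.card ι * b i ^ 2 ≤ (Fintype.card ι - 1) * ∑ j, b j ^ 2 := by
  classical
  have hsplit : b i + ∑ j ∈ univ.erase i, b j = 0 := by rwa [add_sum_erase _ _ (mem_univ i)]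
  have hsq : ∑ j, b j ^ 2 = b i ^ 2 + ∑ j ∈ univ.erase i, b j ^ 2 :=
    (add_sum_erase _ (fun j ↦ b j ^ 2) (mem_univ i)).symm
  have hcard : ((univ.erase i).card : ℝ) = Fintype.card ι - 1 := by
    rw [card_erase_of_mem (mem_univ i), card_univ,
      Nat.cast_sub (Fintype.card_pos_iff.2 ⟨i⟩), Nat.cast_one]
  have hcs : b i ^ 2 ≤ (Fintype.card ι - 1) * ∑ j ∈ univ.erase i, b j ^ 2 := by
    rw [eq_neg_of_add_eq_zero_left hsplit, neg_sq, ← hcard]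
    exact sq_sum_le_card_mul_sum_sq
  rw [hsq]
  linarith

theorem sum_pow_three_le_of_le {b : ι → ℝ} (hb : ∑ i, b i = 0) (r : ℝ) {s : ℝ}
    (hs : ∀ i, b i ≤ s) :
    ∑ i, b i ^ 3 ≤ (2 * r + s) * ∑ i, b i ^ 2 + Fintype.card ι * r ^ 2 * s := by
  have hcubic : ∀ i, b i ^ 3 ≤ (2 * r + s) * b i ^ 2 - (r ^ 2 + 2 * r * s) * b i + r ^ 2 * s :=
    fun i ↦ by nlinarith [mul_nonpos_of_nonneg_of_nonpos (sq_nonneg (b i - r)) (sub_nonpos.2 (hs i))]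
  calc ∑ i, b i ^ 3
      ≤ ∑ i, ((2 * r + s) * b i ^ 2 - (r ^ 2 + 2 * r * s) * b i + r ^ 2 * s) :=
        sum_le_sum fun i _ ↦ hcubic i
    _ = _ := by
        simp only [sum_add_distrib, sum_sub_distrib, ← mul_sum, hb, sum_const, card_univ,
          nsmul_eq_mul]
        ring

theorem sum_pow_three_le_of_sum_eq_zero (hn : 2 ≤ Fintype.card ι) {b : ι → ℝ}
    (hb : ∑ i, b i = 0) :
    ∑ i, b i ^ 3 ≤ (Fintype.card ι - 2) / √(Fintype.card ι * (Fintype.card ι - 1)) *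
      √(∑ i, b i ^ 2) ^ 3 := by
  set n : ℝ := (Fintype.card ι : ℝ)
  set S := ∑ i, b i ^ 2
  set D := √(n * (n - 1))
  have hn' : (2 : ℝ) ≤ n := Nat.ofNat_le_cast.2 hn
  have hD : 0 < D := Real.sqrt_pos.2 (by nlinarith)
  have hD2 : D ^ 2 = n * (n - 1) := Real.sq_sqrt (by nlinarith)
  set t := √S / D
  have ht : 0 ≤ t := by positivity
  have hσ : √S = t * D := (div_mul_cancel₀ _ hD.ne').symm
  have hS : S = n * (n - 1) * t ^ 2 := calc
    S = √S ^ 2 := (Real.sq_sqrt (sum_nonneg fun i _ ↦ sq_nonneg (b i))).symm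
    _ = n * (n - 1) * t ^ 2 := by rw [hσ, mul_pow, hD2]; ring
  have hle : ∀ i, b i ≤ (n - 1) * t := fun i ↦ by
    have h : n * b i ^ 2 ≤ (n - 1) * S := card_mul_sq_le_of_sum_eq_zero hb i
    rw [hS] at h
    refine le_of_sq_le_sq ?_ (by nlinarith)
    nlinarith
  calc ∑ i, b i ^ 3 ≤ (2 * -t + (n - 1) * t) * S + n * (-t) ^ 2 * ((n - 1) * t) :=
        sum_pow_three_le_of_le hb (-t) hle
    _ = (n - 2) / D * √S ^ 3 := by
        rw [hσ, hS]
        field_simp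
        rw [hD2]
        ring

end

theorem okumura_inequality (m : ℕ) (hm : 2 ≤ m) (b : Fin m → ℝ)
    (hsum : ∑ i, b i = 0) :
    -((m - 2) / Real.sqrt (m * (m - 1))) * (∑ i, (b i) ^ 2) ^ ((3 : ℝ) / 2)
      ≤ ∑ i, (b i) ^ 3 ∧
    ∑ i, (b i) ^ 3
      ≤ ((m - 2) / Real.sqrt (m * (m - 1))) * (∑ i, (b i) ^ 2) ^ ((3 : ℝ) / 2) := by
  have hm' : 2 ≤ Fintype.card (Fin m) := by rwa [Fintype.card_fin]
  have hpow : (∑ i, b i ^ 2) ^ ((3 : ℝ) / 2) = √(∑ i, b i ^ 2) ^ 3 := by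
    rw [Real.rpow_div_two_eq_sqrt _ (sum_nonneg fun i _ ↦ sq_nonneg (b i))]
    exact_mod_cast Real.rpow_natCast _ 3
  have upper := sum_pow_three_le_of_sum_eq_zero hm' hsum
  have lower := sum_pow_three_le_of_sum_eq_zero hm' (b := -b) (by simp [hsum])
  simp only [Fintype.card_fin, Pi.neg_apply, neg_sq, Odd.neg_pow (by decide : Odd 3),
    sum_neg_distrib] at upper lower
  rw [hpow]
  constructor <;> linarith
end

section
/- Let b_1, ..., b_m be real numbers (m ≥ 2) with Σ b_i = 0. If Σ b_i³ = ((m-2)/√(m(m-1))) (Σ b_i²)^{3/2}, then m−1 of the b_i's are non-positive and all equal to each other. -/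
/-!
Put `S = ∑ bᵢ²`, `y = √(S / (m(m-1)))` and `x = (m-1)y`. Cauchy–Schwarz on the other `m-1`
numbers gives `bᵢ ≤ x`, and expanding with `∑ bᵢ = 0` shows
`∑ (bᵢ + y)² (x - bᵢ) = (m-2) y S - ∑ bᵢ³`, a sum of nonnegative terms (this is Okumura's
inequality). In the equality case every term vanishes, so each `bᵢ` is `x` or `-y`; if some
`bᵢ = x`, the remaining `bⱼ + y ≥ 0` sum to zero, hence all equal `-y`.
-/

open Finset

namespace Okumura

variable {ι : Type*} [Fintype ι] {b : ι → ℝ} {y : ℝ}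

theorem card_mul_sq_le_of_sum_eq_zero [DecidableEq ι] (hsum : ∑ i, b i = 0) (i : ι) :
    Fintype.card ι * b i ^ 2 ≤ (Fintype.card ι - 1) * ∑ j, b j ^ 2 := by
  have hrest : ∑ j ∈ univ.erase i, b j = -b i := by
    rw [sum_erase_eq_sub (mem_univ i), hsum, zero_sub]
  have hcs := sq_sum_le_card_mul_sum_sq (s := univ.erase i) (f := b)
  rw [hrest, sum_erase_eq_sub (mem_univ i), card_erase_of_mem (mem_univ i), card_univ,
    Nat.cast_pred (Fintype.card_pos_iff.2 ⟨i⟩)] at hcs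
  nlinarith

theorem le_sub_one_mul_of_sum_eq_zero (hy : 0 ≤ y) (hsum : ∑ i, b i = 0)
    (hS : ∑ i, b i ^ 2 = Fintype.card ι * (Fintype.card ι - 1) * y ^ 2) (i : ι) :
    b i ≤ (Fintype.card ι - 1) * y := by
  have hn : (1 : ℝ) ≤ Fintype.card ι := by exact_mod_cast (Fintype.card_pos_iff.2 ⟨i⟩)
  have hsq : b i ^ 2 ≤ ((Fintype.card ι - 1) * y) ^ 2 := by
    classical
    have := card_mul_sq_le_of_sum_eq_zero hsum i
    rw [hS] at this
    nlinarith
  exact (abs_le_of_sq_le_sq hsq (by positivity)).trans' (le_abs_self _)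

theorem sum_sq_add_mul_sub_eq (hsum : ∑ i, b i = 0)
    (hS : ∑ i, b i ^ 2 = Fintype.card ι * (Fintype.card ι - 1) * y ^ 2) :
    ∑ i, (b i + y) ^ 2 * ((Fintype.card ι - 1) * y - b i)
      = (Fintype.card ι - 2) * y * ∑ i, b i ^ 2 - ∑ i, b i ^ 3 := by
  set n : ℝ := (Fintype.card ι : ℝ)
  have hexpand : ∀ i, (b i + y) ^ 2 * ((n - 1) * y - b i)
      = (n - 3) * y * b i ^ 2 + (2 * n - 3) * y ^ 2 * b i + (n - 1) * y ^ 3 - b i ^ 3 := by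
    intro i; ring
  simp only [hexpand, sum_sub_distrib, sum_add_distrib, ← mul_sum, sum_const, card_univ,
    nsmul_eq_mul, hsum, hS]
  ring

theorem eq_or_eq_neg_of_sum_cube_eq (hy : 0 ≤ y) (hsum : ∑ i, b i = 0)
    (hS : ∑ i, b i ^ 2 = Fintype.card ι * (Fintype.card ι - 1) * y ^ 2)
    (hcube : ∑ i, b i ^ 3 = (Fintype.card ι - 2) * y * ∑ i, b i ^ 2) (i : ι) :
    b i = (Fintype.card ι - 1) * y ∨ b i = -y := by
  have hzero : ∑ i, (b i + y) ^ 2 * ((Fintype.card ι - 1) * y - b i) = 0 := by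
    rw [sum_sq_add_mul_sub_eq hsum hS, hcube, sub_self]
  have hterm := (sum_eq_zero_iff_of_nonneg fun j _ => mul_nonneg (sq_nonneg _)
    (sub_nonneg.2 (le_sub_one_mul_of_sum_eq_zero hy hsum hS j))).1 hzero i (mem_univ i)
  rcases mul_eq_zero.1 hterm with h | h
  · exact Or.inr (eq_neg_of_add_eq_zero_left (pow_eq_zero_iff two_ne_zero |>.1 h))
  · exact Or.inl (sub_eq_zero.1 h).symm

theorem exists_forall_ne_eq_neg [DecidableEq ι] [Nonempty ι] (hy : 0 ≤ y) (hsum : ∑ i, b i = 0)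
    (hval : ∀ i, b i = (Fintype.card ι - 1) * y ∨ b i = -y) :
    ∃ i, ∀ j, j ≠ i → b j = -y := by
  by_cases hx : ∃ i, b i = (Fintype.card ι - 1) * y
  · obtain ⟨i, hi⟩ := hx
    have hrest : ∑ j ∈ univ.erase i, (b j + y) = 0 := by
      rw [sum_add_distrib, sum_erase_eq_sub (mem_univ i), hsum, hi, sum_const,
        card_erase_of_mem (mem_univ i), card_univ, nsmul_eq_mul,
        Nat.cast_pred Fintype.card_pos]
      ring
    have hn : (1 : ℝ) ≤ Fintype.card ι := by exact_mod_cast Fintype.card_pos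
    have hnonneg : ∀ j ∈ univ.erase i, 0 ≤ b j + y := by
      intro j _
      rcases hval j with h | h <;> rw [h] <;> nlinarith
    refine ⟨i, fun j hj => eq_neg_of_add_eq_zero_left ?_⟩
    exact (sum_eq_zero_iff_of_nonneg hnonneg).1 hrest j (mem_erase.2 ⟨hj, mem_univ j⟩)
  · push Not at hx
    exact ⟨Classical.arbitrary ι, fun j _ => (hval j).resolve_left (hx j)⟩

end Okumura

open Okumura in
theorem okumura_equality_case (m : ℕ) (hm : 2 ≤ m) (b : Fin m → ℝ)
    (hsum : ∑ i, b i = 0)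
    (heq : ∑ i, (b i) ^ 3
      = ((m - 2) / Real.sqrt (m * (m - 1))) * (∑ i, (b i) ^ 2) ^ ((3 : ℝ) / 2)) :
    ∃ i : Fin m, (∀ j, j ≠ i → b j ≤ 0) ∧ (∀ j k, j ≠ i → k ≠ i → b j = b k) := by
  set S := ∑ i, b i ^ 2
  set y := Real.sqrt (S / (m * (m - 1)))
  have hS0 : 0 ≤ S := sum_nonneg fun i _ => sq_nonneg (b i)
  have hmm : (0 : ℝ) < m * (m - 1) := by
    have : (2 : ℝ) ≤ m := by exact_mod_cast hm
    nlinarith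
  have hy : 0 ≤ y := Real.sqrt_nonneg _
  have hS : S = Fintype.card (Fin m) * (Fintype.card (Fin m) - 1) * y ^ 2 := by
    rw [Fintype.card_fin, Real.sq_sqrt (div_nonneg hS0 hmm.le), mul_div_cancel₀ _ hmm.ne']
  have hcube : ∑ i, b i ^ 3 = (Fintype.card (Fin m) - 2) * y * S := by
    have hrpow : S ^ ((3 : ℝ) / 2) = S * Real.sqrt S := by
      rw [show (3 : ℝ) / 2 = 1 + 1 / 2 by norm_num, Real.rpow_add' hS0 (by norm_num),
        Real.rpow_one, Real.sqrt_eq_rpow]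
    have hy' : y = Real.sqrt S / Real.sqrt (m * (m - 1)) := Real.sqrt_div hS0 _
    rw [heq, hrpow, Fintype.card_fin, hy']
    ring
  have : Nonempty (Fin m) := ⟨⟨0, by omega⟩⟩
  obtain ⟨i, hi⟩ := exists_forall_ne_eq_neg hy hsum (eq_or_eq_neg_of_sum_cube_eq hy hsum hS hcube)
  exact ⟨i, fun j hj => (hi j hj).trans_le (neg_nonpos.2 hy),
    fun j k hj hk => (hi j hj).trans (hi k hk).symm⟩
end
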